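/- arXiv:2404.08473 — 2 statements merged into one kernel-verified Lean document; each statement's English description precedes it below -/
import Mathlib

section
/- Let H be a complex Hilbert space and let T ∈ B(H) be such that ker(I − T) is properly contained in ker(I − T*) (i.e., ker(I − T) ⊆ ker(I − T*) and ker(I − T) ≠ ker(I − T*)). Then ker(I − T) reduces T, the power sequence {T^n} does not converge weakly to any orthogonal projection, and T is not weakly stable. -/
/-!
Every vector `z` fixed by `T*` satisfies `⟪Tⁿ x, z⟫ = ⟪x, z⟫` for all `n`. If `Tⁿ → P` weakly, the
weak limit of `Tⁿ⁺¹` gives `T P = P`, and the identity above gives `P* z = z`; when `P` is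
self-adjoint this means `z = P z` lies in the range of `P`, so `T z = z`. Hence a self-adjoint weak
limit forces `ker (I - T*) ⊆ ker (I - T)`, which the strict inclusion forbids; weak stability is the
special case `P = 0`.
-/

open Filter Topology
open scoped InnerProductSpace

namespace ContinuousLinearMap

variable {𝕜 E : Type*} [RCLike 𝕜] [NormedAddCommGroup E] [InnerProductSpace 𝕜 E]

lemma mem_ker_one_sub_iff (T : E →L[𝕜] E) (x : E) :
    x ∈ LinearMap.ker ((1 - T : E →L[𝕜] E) : E →ₗ[𝕜] E) ↔ T x = x := by
  rw [LinearMap.mem_ker, coe_coe, sub_apply, one_apply_eq_self, sub_eq_zero, eq_comm]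

def WeakPowLimit (T P : E →L[𝕜] E) : Prop :=
  ∀ x y : E, Tendsto (fun n : ℕ => ⟪(T ^ n) x, y⟫_𝕜) atTop (𝓝 ⟪P x, y⟫_𝕜)

variable [CompleteSpace E]

lemma inner_pow_apply_succ (T : E →L[𝕜] E) (n : ℕ) (x y : E) :
    ⟪(T ^ (n + 1)) x, y⟫_𝕜 = ⟪(T ^ n) x, adjoint T y⟫_𝕜 := by
  rw [adjoint_inner_right, pow_succ', mul_apply_eq_comp]

lemma inner_pow_apply_of_adjoint_apply_eq {T : E →L[𝕜] E} {z : E} (hz : adjoint T z = z)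
    (x : E) (n : ℕ) : ⟪(T ^ n) x, z⟫_𝕜 = ⟪x, z⟫_𝕜 := by
  induction n with
  | zero => simp
  | succ n ih => rw [inner_pow_apply_succ, hz, ih]

lemma WeakPowLimit.apply_apply_eq {T P : E →L[𝕜] E} (h : WeakPowLimit T P) (x : E) :
    T (P x) = P x := by
  refine ext_inner_right 𝕜 fun y => tendsto_nhds_unique ?_ ((h x y).comp (tendsto_add_atTop_nat 1))
  simp only [Function.comp_def, inner_pow_apply_succ]
  simpa only [adjoint_inner_right] using h x (adjoint T y)

lemma WeakPowLimit.adjoint_apply_of_adjoint_apply_eq {T P : E →L[𝕜] E} (h : WeakPowLimit T P)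
    {z : E} (hz : adjoint T z = z) : adjoint P z = z := by
  refine ext_inner_left 𝕜 fun x => ?_
  rw [adjoint_inner_right]
  refine tendsto_nhds_unique (h x z) ?_
  simp only [inner_pow_apply_of_adjoint_apply_eq hz]
  exact tendsto_const_nhds

lemma WeakPowLimit.ker_one_sub_adjoint_le {T P : E →L[𝕜] E} (h : WeakPowLimit T P)
    (hP : adjoint P = P) :
    LinearMap.ker ((1 - adjoint T : E →L[𝕜] E) : E →ₗ[𝕜] E) ≤
      LinearMap.ker ((1 - T : E →L[𝕜] E) : E →ₗ[𝕜] E) := by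
  intro z hz
  rw [mem_ker_one_sub_iff] at hz ⊢
  have hPz : P z = z := by
    simpa only [hP] using h.adjoint_apply_of_adjoint_apply_eq hz
  rw [← hPz, h.apply_apply_eq]

end ContinuousLinearMap

open ContinuousLinearMap in
/-- If `ker (I - T)` is properly contained in `ker (I - T*)`, then `ker (I - T)` reduces
`T`, the power sequence `{T^n}` is not weakly convergent to an orthogonal projection,
and `T` is not weakly stable. -/
theorem stmt9 {H : Type*} [NormedAddCommGroup H] [InnerProductSpace ℂ H] [CompleteSpace H]
    (T : H →L[ℂ] H)
    (hsub : LinearMap.ker ((1 - T : H →L[ℂ] H) : H →ₗ[ℂ] H) ≤ LinearMap.ker ((1 - ContinuousLinearMap.adjoint T : H →L[ℂ] H) : H →ₗ[ℂ] H))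
    (hne : LinearMap.ker ((1 - T : H →L[ℂ] H) : H →ₗ[ℂ] H) ≠ LinearMap.ker ((1 - ContinuousLinearMap.adjoint T : H →L[ℂ] H) : H →ₗ[ℂ] H)) :
    ((∀ x ∈ LinearMap.ker ((1 - T : H →L[ℂ] H) : H →ₗ[ℂ] H), T x ∈ LinearMap.ker ((1 - T : H →L[ℂ] H) : H →ₗ[ℂ] H)) ∧
      (∀ x ∈ LinearMap.ker ((1 - T : H →L[ℂ] H) : H →ₗ[ℂ] H),
        ContinuousLinearMap.adjoint T x ∈ LinearMap.ker ((1 - T : H →L[ℂ] H) : H →ₗ[ℂ] H))) ∧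
    (¬ ∃ P : H →L[ℂ] H, (P ∘L P = P ∧ ContinuousLinearMap.adjoint P = P) ∧
      ∀ x y : H,
        Tendsto (fun n : ℕ => (inner ℂ ((T ^ n) x) y : ℂ)) atTop (𝓝 (inner ℂ (P x) y))) ∧
    ¬ (∀ x y : H, Tendsto (fun n : ℕ => (inner ℂ ((T ^ n) x) y : ℂ)) atTop (𝓝 (0 : ℂ))) := by
  have not_proj_limit : ¬ ∃ P : H →L[ℂ] H, (P ∘L P = P ∧ adjoint P = P) ∧ WeakPowLimit T P := by
    rintro ⟨P, ⟨-, hP⟩, hlim⟩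
    exact hne (le_antisymm hsub (hlim.ker_one_sub_adjoint_le hP))
  refine ⟨⟨fun x hx => ?_, fun x hx => ?_⟩, not_proj_limit, fun hstable => not_proj_limit ⟨0, ?_, ?_⟩⟩
  · rw [mem_ker_one_sub_iff] at hx ⊢
    rw [hx, hx]
  · have hx' := hsub hx
    rw [mem_ker_one_sub_iff] at hx hx' ⊢
    rw [hx', hx]
  · simp
  · simpa [WeakPowLimit] using hstable
end

section
/- Let H be a complex Hilbert space and suppose T, P ∈ B(H) are such that the power sequence {T^n} converges weakly to P and liminf_{n→∞} ‖T^n‖ ≤ 1. Then P is the orthogonal projection of H onto ker(I − T), the subspace ker(I − T) reduces T, and ker(I − T) = ker(I − T*). -/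
open Filter Topology

/-!
From `T ^ (n + 1) = T ∘ T ^ n` one gets `T P = P`, so `T` and `P` have the same fixed points and
`P` is idempotent. Banach–Steinhaus bounds `‖T ^ n‖`, which makes the `liminf` hypothesis give
`‖P‖ ≤ 1`. An idempotent contraction of a Hilbert space is self-adjoint: for a contraction `A`,
`A x = x` gives `re ⟪A† x, x⟫ = ‖x‖²` with `‖A† x‖ ≤ ‖x‖`, which forces `A† x = x`; applied to
`P` this yields `P† P = P`. Finally `(T†) ^ n → P† = P` weakly, so the fixed points of `T†` are
those of `P` as well.
-/

section WeakOperatorLimits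

open ContinuousLinearMap
open scoped InnerProductSpace InnerProduct

variable {𝕜 E F : Type*} [RCLike 𝕜] [NormedAddCommGroup E] [NormedAddCommGroup F]
  [InnerProductSpace 𝕜 E] [InnerProductSpace 𝕜 F]

def TendstoWeakly (A : ℕ → E →L[𝕜] F) (P : E →L[𝕜] F) : Prop :=
  ∀ x y, Tendsto (fun n ↦ ⟪A n x, y⟫_𝕜) atTop (𝓝 ⟪P x, y⟫_𝕜)

namespace TendstoWeakly

variable {A : ℕ → E →L[𝕜] F} {P Q : E →L[𝕜] F}

theorem unique (hP : TendstoWeakly A P) (hQ : TendstoWeakly A Q) : P = Q :=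
  ext fun x ↦ ext_inner_right 𝕜 fun y ↦ tendsto_nhds_unique (hP x y) (hQ x y)

theorem comp_add (h : TendstoWeakly A P) (k : ℕ) : TendstoWeakly (fun n ↦ A (n + k)) P :=
  fun x y ↦ (h x y).comp (tendsto_add_atTop_nat k)

theorem comp_left [CompleteSpace F] (h : TendstoWeakly A P) (B : F →L[𝕜] F) :
    TendstoWeakly (fun n ↦ B ∘L A n) (B ∘L P) := fun x y ↦ by
  simpa only [comp_apply, ← adjoint_inner_right] using h x ((B†) y)

theorem adjoint [CompleteSpace E] [CompleteSpace F] (h : TendstoWeakly A P) :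
    TendstoWeakly (fun n ↦ (A n)†) (P†) := fun x y ↦ by
  simpa only [adjoint_inner_left, inner_conj_symm, Function.comp_def] using
    (RCLike.continuous_conj.tendsto _).comp (h y x)

theorem exists_norm_le [CompleteSpace E] [CompleteSpace F] (h : TendstoWeakly A P) :
    ∃ C, ∀ n, ‖A n‖ ≤ C := by
  refine banach_steinhaus fun x ↦ ?_
  obtain ⟨C, hC⟩ : ∃ C, ∀ n, ‖innerSL 𝕜 (A n x)‖ ≤ C := banach_steinhaus fun y ↦ by
    obtain ⟨C, hC⟩ := (h x y).norm.bddAbove_range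
    exact ⟨C, fun n ↦ hC ⟨n, rfl⟩⟩
  exact ⟨C, fun n ↦ by simpa only [innerSL_apply_norm] using hC n⟩

theorem norm_le_of_liminf_le [CompleteSpace E] [CompleteSpace F] (h : TendstoWeakly A P)
    {c : ℝ} (hc : liminf (fun n ↦ ‖A n‖) atTop ≤ c) : ‖P‖ ≤ c := by
  -- without a bound on `‖A n‖` the real `liminf` could be a junk value
  obtain ⟨C, hC⟩ := h.exists_norm_le
  refine le_of_forall_gt_imp_ge_of_dense fun b hb ↦ ?_
  have hfreq : ∃ᶠ n in atTop, ‖A n‖ < b :=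
    frequently_lt_of_liminf_lt (isCoboundedUnder_ge_of_le atTop hC) (hc.trans_lt hb)
  have hb0 : 0 ≤ b := let ⟨n, hn⟩ := hfreq.exists; (norm_nonneg _).trans hn.le
  refine opNorm_le_bound _ hb0 fun x ↦ ?_
  rw [← innerSL_apply_norm 𝕜 (P x)]
  refine opNorm_le_bound _ (by positivity) fun y ↦ ?_
  refine le_of_tendsto_of_frequently (h x y).norm (hfreq.mono fun n hn ↦ ?_)
  calc ‖⟪A n x, y⟫_𝕜‖ ≤ ‖A n x‖ * ‖y‖ := norm_inner_le_norm _ _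
    _ ≤ b * ‖x‖ * ‖y‖ := by gcongr; exact (A n).le_of_opNorm_le hn.le x

end TendstoWeakly

theorem ContinuousLinearMap.adjoint_apply_eq_self_of_norm_le_one [CompleteSpace E]
    {A : E →L[𝕜] E} (hA : ‖A‖ ≤ 1) {x : E} (hx : A x = x) : (A†) x = x := by
  refine eq_of_norm_le_re_inner_eq_norm_sq (𝕜 := 𝕜) ?_ ?_
  · exact le_of_opNorm_le _ (by rwa [LinearIsometryEquiv.norm_map]) x |>.trans (one_mul _).le
  · rw [adjoint_inner_left, hx, inner_self_eq_norm_sq]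

theorem IsIdempotentElem.isSelfAdjoint_of_norm_le_one [CompleteSpace E] {P : E →L[𝕜] E}
    (hP : IsIdempotentElem P) (hP1 : ‖P‖ ≤ 1) : IsSelfAdjoint P := by
  have hfix : P† ∘L P = P :=
    ext fun x ↦ adjoint_apply_eq_self_of_norm_le_one hP1 (DFunLike.congr_fun hP x)
  rw [isSelfAdjoint_iff', ← hfix, adjoint_comp, adjoint_adjoint]

section Powers

variable [CompleteSpace E] {T P : E →L[𝕜] E}

theorem TendstoWeakly.comp_eq_of_pow (h : TendstoWeakly (T ^ ·) P) : T ∘L P = P :=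
  (h.comp_left T).unique (by simpa only [pow_succ', mul_def] using h.comp_add 1)

theorem TendstoWeakly.apply_eq_self_iff_of_pow (h : TendstoWeakly (T ^ ·) P) {x : E} :
    T x = x ↔ P x = x := by
  refine ⟨fun hx ↦ ext_inner_right 𝕜 fun y ↦ tendsto_nhds_unique (h x y) ?_, fun hx ↦ ?_⟩
  · simpa only [FunLike.coe_pow_eq_iterate, Function.iterate_fixed hx] using tendsto_const_nhds
  · rw [← hx, ← comp_apply, h.comp_eq_of_pow]

end Powers

theorem ContinuousLinearMap.mem_ker_one_sub_iff_s15 (T : E →L[𝕜] E) (x : E) :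
    x ∈ LinearMap.ker ((1 - T : E →L[𝕜] E) : E →ₗ[𝕜] E) ↔ T x = x := by
  rw [LinearMap.mem_ker, coe_coe, sub_apply, one_apply_eq_self, sub_eq_zero, eq_comm]

end WeakOperatorLimits

/-- If `{T^n}` converges weakly to `P` and `liminf ‖T^n‖ ≤ 1`, then `P` is the
orthogonal projection of `H` onto `ker (I - T)`, `ker (I - T)` reduces `T`, and
`ker (I - T) = ker (I - T*)`. -/
theorem stmt15 {H : Type*} [NormedAddCommGroup H] [InnerProductSpace ℂ H] [CompleteSpace H]
    (T P : H →L[ℂ] H)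
    (hconv : ∀ x y : H,
      Tendsto (fun n : ℕ => (inner ℂ ((T ^ n) x) y : ℂ)) atTop (𝓝 (inner ℂ (P x) y)))
    (hliminf : Filter.liminf (fun n : ℕ => ‖T ^ n‖) atTop ≤ 1) :
    (P ∘L P = P ∧ ContinuousLinearMap.adjoint P = P ∧
      LinearMap.range (P : H →ₗ[ℂ] H) = LinearMap.ker ((1 - T : H →L[ℂ] H) : H →ₗ[ℂ] H)) ∧
    ((∀ x ∈ LinearMap.ker ((1 - T : H →L[ℂ] H) : H →ₗ[ℂ] H), T x ∈ LinearMap.ker ((1 - T : H →L[ℂ] H) : H →ₗ[ℂ] H)) ∧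
      (∀ x ∈ LinearMap.ker ((1 - T : H →L[ℂ] H) : H →ₗ[ℂ] H),
        ContinuousLinearMap.adjoint T x ∈ LinearMap.ker ((1 - T : H →L[ℂ] H) : H →ₗ[ℂ] H))) ∧
    LinearMap.ker ((1 - T : H →L[ℂ] H) : H →ₗ[ℂ] H) = LinearMap.ker ((1 - ContinuousLinearMap.adjoint T : H →L[ℂ] H) : H →ₗ[ℂ] H) := by
  have h : TendstoWeakly (T ^ ·) P := hconv
  have hfix (x : H) : T x = x ↔ P x = x := h.apply_eq_self_iff_of_pow
  have hidem : P ∘L P = P := ContinuousLinearMap.ext fun x ↦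
    (hfix (P x)).1 (by rw [← ContinuousLinearMap.comp_apply, h.comp_eq_of_pow])
  have hself : ContinuousLinearMap.adjoint P = P := ContinuousLinearMap.isSelfAdjoint_iff'.1 <|
    IsIdempotentElem.isSelfAdjoint_of_norm_le_one hidem (h.norm_le_of_liminf_le hliminf)
  have hfix' (x : H) : ContinuousLinearMap.adjoint T x = x ↔ P x = x := by
    have h' : TendstoWeakly (ContinuousLinearMap.adjoint T ^ ·) P := by
      simpa only [← ContinuousLinearMap.star_eq_adjoint, star_pow, hself] using h.adjoint
    exact h'.apply_eq_self_iff_of_pow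
  simp only [ContinuousLinearMap.mem_ker_one_sub_iff_s15]
  refine ⟨⟨hidem, hself, ?_⟩, ⟨fun x hx ↦ by rw [hx, hx], fun x hx ↦ ?_⟩, ?_⟩
  · ext x
    simp only [LinearMap.mem_range, ContinuousLinearMap.coe_coe,
      ContinuousLinearMap.mem_ker_one_sub_iff_s15, hfix]
    exact ⟨fun ⟨y, hy⟩ ↦ hy ▸ DFunLike.congr_fun hidem y, fun hx ↦ ⟨x, hx⟩⟩
  · rwa [(hfix' x).2 ((hfix x).1 hx)]
  · ext x
    simp only [ContinuousLinearMap.mem_ker_one_sub_iff_s15, hfix, hfix']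
end
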